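/- arXiv:2112.01253 — 3 statements merged into one kernel-verified Lean document; each statement's English description precedes it below -/
import Mathlib

section
/- Let V_g, V_q : ℕ → ℝ be nonnegative sequences (incremental storage functions) and let Δx̃ : ℕ → ℝ^{nx}, Δz : ℕ → ℝ^{nz}, Δv : ℕ → ℝ^{nv}, Δw : ℕ → ℝ^{nw} be sequences of vectors. Let Q_xx ∈ ℝ^{nx×nx}, Q_zz ∈ ℝ^{nz×nz}, R_vv ∈ ℝ^{nv×nv}, R_ww ∈ ℝ^{nw×nw}, R̄ ∈ ℝ^{nx×nx}, Q̄ ∈ ℝ^{nv×nv} be symmetric matrices and S_vx ∈ ℝ^{nv×nx}, S_wz ∈ ℝ^{nw×nz}, S̄ ∈ ℝ^{nx×nv} be matrices. Assume: (i) for every t, V_g(t+1) − V_g(t) ≤ Δx̃ₜᵀ Q_xx Δx̃ₜ + Δzₜᵀ Q_zz Δzₜ + 2 Δvₜᵀ S_vx Δx̃ₜ + 2 Δwₜᵀ S_wz Δzₜ + Δvₜᵀ R_vv Δvₜ + Δwₜᵀ R_ww Δwₜ; (ii) for every t, V_q(t+1) − V_q(t) ≤ Δvₜᵀ Q̄ Δvₜ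 + 2 Δx̃ₜᵀ S̄ Δvₜ + Δx̃ₜᵀ R̄ Δx̃ₜ; (iii) the symmetric block matrix M = [[Q_xx + R̄, S_vxᵀ + S̄],[S_vx + S̄ᵀ, R_vv + Q̄]] is negative semidefinite. Then for every t, (V_g + V_q)(t+1) − (V_g + V_q)(t) ≤ Δzₜᵀ Q_zz Δzₜ + 2 Δwₜᵀ S_wz Δzₜ + Δwₜᵀ R_ww Δwₜ. -/
/-!
Adding the two dissipation inequalities, every term involving `Δx` or `Δv` is a term of the
quadratic form of the coupling matrix `M` at `(Δx, Δv)`, which is nonpositive; what remains is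
the closed-loop supply rate in `(Δz, Δw)`.
-/

open Matrix

section BlockQuadraticForm

variable {m n R : Type*} [Fintype m] [Fintype n] [CommRing R]

theorem sumElim_dotProduct_fromBlocks_transpose_mulVec (A : Matrix m m R) (C : Matrix n m R)
    (D : Matrix n n R) (x : m → R) (v : n → R) :
    Sum.elim x v ⬝ᵥ (fromBlocks A Cᵀ C D *ᵥ Sum.elim x v) =
      x ⬝ᵥ (A *ᵥ x) + 2 * (v ⬝ᵥ (C *ᵥ x)) + v ⬝ᵥ (D *ᵥ v) := by
  rw [fromBlocks_mulVec, sumElim_dotProduct_sumElim, Sum.elim_comp_inl, Sum.elim_comp_inr,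
    dotProduct_add, dotProduct_add, dotProduct_transpose_mulVec]
  ring

theorem quadForm_fromBlocks_transpose_nonpos [PartialOrder R] [IsOrderedAddMonoid R]
    [StarRing R] [TrivialStar R] {A : Matrix m m R} {C : Matrix n m R} {D : Matrix n n R}
    (h : (-fromBlocks A Cᵀ C D).PosSemidef) (x : m → R) (v : n → R) :
    x ⬝ᵥ (A *ᵥ x) + 2 * (v ⬝ᵥ (C *ᵥ x)) + v ⬝ᵥ (D *ᵥ v) ≤ 0 := by
  have hneg := h.dotProduct_mulVec_nonneg (Sum.elim x v)
  rwa [star_trivial, neg_mulVec, dotProduct_neg,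
    sumElim_dotProduct_fromBlocks_transpose_mulVec, neg_nonneg] at hneg

end BlockQuadraticForm

theorem dissipation_combination_general
    {nx nz nv nw : ℕ}
    (Vg Vq : ℕ → ℝ)
    (Δx : ℕ → Fin nx → ℝ) (Δz : ℕ → Fin nz → ℝ)
    (Δv : ℕ → Fin nv → ℝ) (Δw : ℕ → Fin nw → ℝ)
    (Qxx : Matrix (Fin nx) (Fin nx) ℝ) (Qzz : Matrix (Fin nz) (Fin nz) ℝ)
    (Rvv : Matrix (Fin nv) (Fin nv) ℝ) (Rww : Matrix (Fin nw) (Fin nw) ℝ)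
    (Rbar : Matrix (Fin nx) (Fin nx) ℝ) (Qbar : Matrix (Fin nv) (Fin nv) ℝ)
    (Svx : Matrix (Fin nv) (Fin nx) ℝ) (Swz : Matrix (Fin nw) (Fin nz) ℝ)
    (Sbar : Matrix (Fin nx) (Fin nv) ℝ)
    (hg : ∀ t, Vg (t + 1) - Vg t ≤
      Δx t ⬝ᵥ (Qxx *ᵥ Δx t) + Δz t ⬝ᵥ (Qzz *ᵥ Δz t)
        + 2 * (Δv t ⬝ᵥ (Svx *ᵥ Δx t)) + 2 * (Δw t ⬝ᵥ (Swz *ᵥ Δz t))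
        + Δv t ⬝ᵥ (Rvv *ᵥ Δv t) + Δw t ⬝ᵥ (Rww *ᵥ Δw t))
    (hq : ∀ t, Vq (t + 1) - Vq t ≤
      Δv t ⬝ᵥ (Qbar *ᵥ Δv t) + 2 * (Δx t ⬝ᵥ (Sbar *ᵥ Δv t))
        + Δx t ⬝ᵥ (Rbar *ᵥ Δx t))
    (hM : (-(Matrix.fromBlocks (Qxx + Rbar) (Svxᵀ + Sbar)
        (Svx + Sbarᵀ) (Rvv + Qbar))).PosSemidef) :
    ∀ t, (Vg (t + 1) + Vq (t + 1)) - (Vg t + Vq t) ≤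
      Δz t ⬝ᵥ (Qzz *ᵥ Δz t) + 2 * (Δw t ⬝ᵥ (Swz *ᵥ Δz t))
        + Δw t ⬝ᵥ (Rww *ᵥ Δw t) := by
  intro t
  rw [show Svxᵀ + Sbar = (Svx + Sbarᵀ)ᵀ by rw [transpose_add, transpose_transpose]] at hM
  have hcoupling := quadForm_fromBlocks_transpose_nonpos hM (Δx t) (Δv t)
  simp only [add_mulVec, dotProduct_add, dotProduct_transpose_mulVec] at hcoupling
  linarith [hg t, hq t]

/-- Dissipation-combination step of Theorem 1 (Youla-REN closed-loop stability):
adding the per-step dissipation inequalities of the plant-difference system `G_Δ`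
and the Youla parameter `Q_θ`, and using negative semidefiniteness of the coupling
block matrix `M`, yields the closed-loop per-step dissipation inequality. -/
theorem dissipation_combination
    {nx nz nv nw : ℕ}
    (Vg Vq : ℕ → ℝ)
    (hVg : ∀ t, 0 ≤ Vg t) (hVq : ∀ t, 0 ≤ Vq t)
    (Δx : ℕ → Fin nx → ℝ) (Δz : ℕ → Fin nz → ℝ)
    (Δv : ℕ → Fin nv → ℝ) (Δw : ℕ → Fin nw → ℝ)
    (Qxx : Matrix (Fin nx) (Fin nx) ℝ) (Qzz : Matrix (Fin nz) (Fin nz) ℝ)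
    (Rvv : Matrix (Fin nv) (Fin nv) ℝ) (Rww : Matrix (Fin nw) (Fin nw) ℝ)
    (Rbar : Matrix (Fin nx) (Fin nx) ℝ) (Qbar : Matrix (Fin nv) (Fin nv) ℝ)
    (Svx : Matrix (Fin nv) (Fin nx) ℝ) (Swz : Matrix (Fin nw) (Fin nz) ℝ)
    (Sbar : Matrix (Fin nx) (Fin nv) ℝ)
    (hQxx : Qxx.IsSymm) (hQzz : Qzz.IsSymm) (hRvv : Rvv.IsSymm)
    (hRww : Rww.IsSymm) (hRbar : Rbar.IsSymm) (hQbar : Qbar.IsSymm)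
    (hg : ∀ t, Vg (t + 1) - Vg t ≤
      Δx t ⬝ᵥ (Qxx *ᵥ Δx t) + Δz t ⬝ᵥ (Qzz *ᵥ Δz t)
        + 2 * (Δv t ⬝ᵥ (Svx *ᵥ Δx t)) + 2 * (Δw t ⬝ᵥ (Swz *ᵥ Δz t))
        + Δv t ⬝ᵥ (Rvv *ᵥ Δv t) + Δw t ⬝ᵥ (Rww *ᵥ Δw t))
    (hq : ∀ t, Vq (t + 1) - Vq t ≤
      Δv t ⬝ᵥ (Qbar *ᵥ Δv t) + 2 * (Δx t ⬝ᵥ (Sbar *ᵥ Δv t))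
        + Δx t ⬝ᵥ (Rbar *ᵥ Δx t))
    (hM : (-(Matrix.fromBlocks (Qxx + Rbar) (Svxᵀ + Sbar)
        (Svx + Sbarᵀ) (Rvv + Qbar))).PosSemidef) :
    ∀ t, (Vg (t + 1) + Vq (t + 1)) - (Vg t + Vq t) ≤
      Δz t ⬝ᵥ (Qzz *ᵥ Δz t) + 2 * (Δw t ⬝ᵥ (Swz *ᵥ Δz t))
        + Δw t ⬝ᵥ (Rww *ᵥ Δw t) :=
  dissipation_combination_general Vg Vq Δx Δz Δv Δw Qxx Qzz Rvv Rww Rbar Qbar Svx Swz Sbar hg hq hM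
end

section
/- Under the hypotheses of the dissipation-combination result — nonnegative sequences V_g, V_q : ℕ → ℝ, vector sequences Δx̃, Δz, Δv, Δw, symmetric matrices Q_xx, Q_zz, R_vv, R_ww, R̄, Q̄ and matrices S_vx, S_wz, S̄ satisfying the two per-step dissipation inequalities and negative semidefiniteness of M = [[Q_xx + R̄, S_vxᵀ + S̄],[S_vx + S̄ᵀ, R_vv + Q̄]] — assume additionally that V_g(0) = 0 and V_q(0) = 0. Then for every T ∈ ℕ, ∑_{t=0}^{T} ( Δzₜᵀ Q_zz Δzₜ + 2 Δwₜᵀ S_wz Δzₜ + Δwₜᵀ R_ww Δwₜ ) ≥ 0. -/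
/-!
Adding the two dissipation inequalities, the (Δx̃, Δv)-terms of both supply rates combine into
the quadratic form of `M` at `(Δx̃, Δv)`, which is nonpositive. Hence `V_g + V_q` is a storage
function for the closed-loop supply in `(Δz, Δw)` alone, and telescoping from zero initial
storage to a nonnegative final storage makes the accumulated supply nonnegative.
-/

open Matrix Finset

theorem sum_range_nonneg_of_dissipation {α : Type*} [AddCommGroup α] [PartialOrder α]
    [IsOrderedAddMonoid α] {V s : ℕ → α} (hV : ∀ t, 0 ≤ V t) (hV0 : V 0 = 0)
    (hdiss : ∀ t, V (t + 1) - V t ≤ s t) (T : ℕ) :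
    0 ≤ ∑ t ∈ range T, s t :=
  calc 0 ≤ V T - V 0 := by rw [hV0, sub_zero]; exact hV T
    _ = ∑ t ∈ range T, (V (t + 1) - V t) := (sum_range_sub V T).symm
    _ ≤ ∑ t ∈ range T, s t := sum_le_sum fun t _ => hdiss t

theorem sumElim_dotProduct_fromBlocks_mulVec_sumElim {l m α : Type*} [Fintype l] [Fintype m]
    [NonUnitalNonAssocSemiring α] (A : Matrix l l α) (B : Matrix l m α) (C : Matrix m l α)
    (D : Matrix m m α) (x : l → α) (y : m → α) :
    Sum.elim x y ⬝ᵥ (fromBlocks A B C D *ᵥ Sum.elim x y)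
      = x ⬝ᵥ (A *ᵥ x) + x ⬝ᵥ (B *ᵥ y) + (y ⬝ᵥ (C *ᵥ x) + y ⬝ᵥ (D *ᵥ y)) := by
  rw [fromBlocks_mulVec, sumElim_dotProduct_sumElim, Sum.elim_comp_inl, Sum.elim_comp_inr,
    dotProduct_add, dotProduct_add]

theorem closed_loop_incremental_IQC_general
    {nx nz nv nw : ℕ}
    (Vg Vq : ℕ → ℝ)
    (hVg : ∀ t, 0 ≤ Vg t) (hVq : ∀ t, 0 ≤ Vq t)
    (hVg0 : Vg 0 = 0) (hVq0 : Vq 0 = 0)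
    (Δx : ℕ → Fin nx → ℝ) (Δz : ℕ → Fin nz → ℝ)
    (Δv : ℕ → Fin nv → ℝ) (Δw : ℕ → Fin nw → ℝ)
    (Qxx : Matrix (Fin nx) (Fin nx) ℝ) (Qzz : Matrix (Fin nz) (Fin nz) ℝ)
    (Rvv : Matrix (Fin nv) (Fin nv) ℝ) (Rww : Matrix (Fin nw) (Fin nw) ℝ)
    (Rbar : Matrix (Fin nx) (Fin nx) ℝ) (Qbar : Matrix (Fin nv) (Fin nv) ℝ)
    (Svx : Matrix (Fin nv) (Fin nx) ℝ) (Swz : Matrix (Fin nw) (Fin nz) ℝ)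
    (Sbar : Matrix (Fin nx) (Fin nv) ℝ)
    (hg : ∀ t, Vg (t + 1) - Vg t ≤
      Δx t ⬝ᵥ (Qxx *ᵥ Δx t) + Δz t ⬝ᵥ (Qzz *ᵥ Δz t)
        + 2 * (Δv t ⬝ᵥ (Svx *ᵥ Δx t)) + 2 * (Δw t ⬝ᵥ (Swz *ᵥ Δz t))
        + Δv t ⬝ᵥ (Rvv *ᵥ Δv t) + Δw t ⬝ᵥ (Rww *ᵥ Δw t))
    (hq : ∀ t, Vq (t + 1) - Vq t ≤
      Δv t ⬝ᵥ (Qbar *ᵥ Δv t) + 2 * (Δx t ⬝ᵥ (Sbar *ᵥ Δv t))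
        + Δx t ⬝ᵥ (Rbar *ᵥ Δx t))
    (hM : (-(Matrix.fromBlocks (Qxx + Rbar) (Svxᵀ + Sbar)
        (Svx + Sbarᵀ) (Rvv + Qbar))).PosSemidef) :
    ∀ T : ℕ, 0 ≤ ∑ t ∈ Finset.range (T + 1),
      (Δz t ⬝ᵥ (Qzz *ᵥ Δz t) + 2 * (Δw t ⬝ᵥ (Swz *ᵥ Δz t))
        + Δw t ⬝ᵥ (Rww *ᵥ Δw t)) := by
  have hcross : ∀ t,
      Δx t ⬝ᵥ (Qxx *ᵥ Δx t) + 2 * (Δv t ⬝ᵥ (Svx *ᵥ Δx t)) + Δv t ⬝ᵥ (Rvv *ᵥ Δv t)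
        + (Δv t ⬝ᵥ (Qbar *ᵥ Δv t) + 2 * (Δx t ⬝ᵥ (Sbar *ᵥ Δv t))
          + Δx t ⬝ᵥ (Rbar *ᵥ Δx t)) ≤ 0 := fun t => by
    have hform := hM.dotProduct_mulVec_nonneg (Sum.elim (Δx t) (Δv t))
    simp only [star_trivial, neg_mulVec, dotProduct_neg,
      sumElim_dotProduct_fromBlocks_mulVec_sumElim, add_mulVec, dotProduct_add,
      dotProduct_transpose_mulVec] at hform
    linarith
  intro T
  exact sum_range_nonneg_of_dissipation (V := Vg + Vq) (fun t => add_nonneg (hVg t) (hVq t))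
    (by simp [hVg0, hVq0]) (fun t => by simp only [Pi.add_apply]; linarith [hg t, hq t, hcross t])
    (T + 1)

/-- Summed (integral) form of the closed-loop incremental IQC in Theorem 1:
telescoping the combined per-step dissipation inequality with zero initial storage
shows the closed-loop supply over any horizon is nonnegative. -/
theorem closed_loop_incremental_IQC
    {nx nz nv nw : ℕ}
    (Vg Vq : ℕ → ℝ)
    (hVg : ∀ t, 0 ≤ Vg t) (hVq : ∀ t, 0 ≤ Vq t)
    (hVg0 : Vg 0 = 0) (hVq0 : Vq 0 = 0)
    (Δx : ℕ → Fin nx → ℝ) (Δz : ℕ → Fin nz → ℝ)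
    (Δv : ℕ → Fin nv → ℝ) (Δw : ℕ → Fin nw → ℝ)
    (Qxx : Matrix (Fin nx) (Fin nx) ℝ) (Qzz : Matrix (Fin nz) (Fin nz) ℝ)
    (Rvv : Matrix (Fin nv) (Fin nv) ℝ) (Rww : Matrix (Fin nw) (Fin nw) ℝ)
    (Rbar : Matrix (Fin nx) (Fin nx) ℝ) (Qbar : Matrix (Fin nv) (Fin nv) ℝ)
    (Svx : Matrix (Fin nv) (Fin nx) ℝ) (Swz : Matrix (Fin nw) (Fin nz) ℝ)
    (Sbar : Matrix (Fin nx) (Fin nv) ℝ)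
    (hQxx : Qxx.IsSymm) (hQzz : Qzz.IsSymm) (hRvv : Rvv.IsSymm)
    (hRww : Rww.IsSymm) (hRbar : Rbar.IsSymm) (hQbar : Qbar.IsSymm)
    (hg : ∀ t, Vg (t + 1) - Vg t ≤
      Δx t ⬝ᵥ (Qxx *ᵥ Δx t) + Δz t ⬝ᵥ (Qzz *ᵥ Δz t)
        + 2 * (Δv t ⬝ᵥ (Svx *ᵥ Δx t)) + 2 * (Δw t ⬝ᵥ (Swz *ᵥ Δz t))
        + Δv t ⬝ᵥ (Rvv *ᵥ Δv t) + Δw t ⬝ᵥ (Rww *ᵥ Δw t))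
    (hq : ∀ t, Vq (t + 1) - Vq t ≤
      Δv t ⬝ᵥ (Qbar *ᵥ Δv t) + 2 * (Δx t ⬝ᵥ (Sbar *ᵥ Δv t))
        + Δx t ⬝ᵥ (Rbar *ᵥ Δx t))
    (hM : (-(Matrix.fromBlocks (Qxx + Rbar) (Svxᵀ + Sbar)
        (Svx + Sbarᵀ) (Rvv + Qbar))).PosSemidef) :
    ∀ T : ℕ, 0 ≤ ∑ t ∈ Finset.range (T + 1),
      (Δz t ⬝ᵥ (Qzz *ᵥ Δz t) + 2 * (Δw t ⬝ᵥ (Swz *ᵥ Δz t))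
        + Δw t ⬝ᵥ (Rww *ᵥ Δw t)) :=
  closed_loop_incremental_IQC_general Vg Vq hVg hVq hVg0 hVq0 Δx Δz Δv Δw Qxx Qzz Rvv Rww Rbar Qbar
    Svx Swz Sbar hg hq hM
end

section
/- Let A ∈ ℝ^{n×n}, B ∈ ℝ^{n×m}, Y ∈ ℝ^{m×n}, let X ∈ ℝ^{n×n} be symmetric positive definite and β > 0. Define W := XAᵀ + AX + BY + YᵀBᵀ and suppose the symmetric block matrix [[W, B, X],[Bᵀ, −β·I_m, 0],[X, 0, −β·I_n]] is negative semidefinite. Then, with A_cl := A + B·Y·X⁻¹ and P := X⁻¹, the matrix A_clᵀ P + P A_cl + (1/β)·P B Bᵀ P + (1/β)·I_n is negative semidefinite. -/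
/-!
Negating the LMI makes its lower-right block `β • 1` positive definite, so by the Schur
complement the LMI is equivalent to `-(W + β⁻¹ (B Bᵀ + X X)) ⪰ 0`. Congruence with the symmetric
matrix `X⁻¹` preserves semidefiniteness and turns this matrix, term by term, into the Riccati
expression for `A_cl = A + B Y X⁻¹` and `P = X⁻¹`.
-/

open Matrix
open scoped ComplexOrder

theorem Matrix.PosSemidef.fromBlocks_smul_one_iff {𝕜 m n : Type*} [RCLike 𝕜] [Fintype m]
    [Fintype n] [DecidableEq n] (A : Matrix m m 𝕜) (B : Matrix m n 𝕜) {c : ℝ} (hc : 0 < c) :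
    (fromBlocks A B Bᴴ (c • 1)).PosSemidef ↔ (A - c⁻¹ • (B * Bᴴ)).PosSemidef := by
  have hD : (c • 1 : Matrix n n 𝕜).PosDef := PosDef.one.smul hc
  have hDinv : (c • 1 : Matrix n n 𝕜)⁻¹ = c⁻¹ • 1 :=
    inv_eq_right_inv (by rw [smul_mul_smul_comm, mul_one, mul_inv_cancel₀ hc.ne', one_smul])
  have := hD.isUnit.invertible
  rw [PosDef.fromBlocks₂₂ _ _ hD, hDinv, Matrix.mul_smul, Matrix.mul_one, Matrix.smul_mul]

theorem Matrix.nonsing_inv_mul_synthesisLMI_mul_nonsing_inv {R n p : Type*} [CommRing R]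
    [Fintype n] [DecidableEq n] [Fintype p] (A X : Matrix n n R) (B : Matrix n p R)
    (Y : Matrix p n R) (c : R) (hX : IsUnit X.det) (hXT : Xᵀ = X) :
    X⁻¹ * (X * Aᵀ + A * X + B * Y + Yᵀ * Bᵀ + c • (B * Bᵀ + X * X)) * X⁻¹ =
      (A + B * Y * X⁻¹)ᵀ * X⁻¹ + X⁻¹ * (A + B * Y * X⁻¹) + c • (X⁻¹ * B * Bᵀ * X⁻¹) + c • 1 := by
  have hXinvT : (X⁻¹)ᵀ = X⁻¹ := by rw [transpose_nonsing_inv, hXT]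
  have cancel (M : Matrix n n R) : X⁻¹ * (X * M) = M := by
    rw [← Matrix.mul_assoc, nonsing_inv_mul X hX, Matrix.one_mul]
  simp only [transpose_add, transpose_mul, hXinvT, Matrix.mul_add, Matrix.add_mul,
    Matrix.smul_mul, Matrix.mul_smul, smul_add, Matrix.mul_assoc, cancel,
    mul_nonsing_inv X hX, Matrix.mul_one]
  abel

theorem synthesis_lmi_to_riccati_general
    {n m : ℕ}
    (A : Matrix (Fin n) (Fin n) ℝ) (B : Matrix (Fin n) (Fin m) ℝ)
    (Y : Matrix (Fin m) (Fin n) ℝ)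
    (X : Matrix (Fin n) (Fin n) ℝ) (hX : X.PosDef)
    (β : ℝ) (hβ : 0 < β)
    (hLMI : (-(Matrix.fromBlocks
        (X * Aᵀ + A * X + B * Y + Yᵀ * Bᵀ)
        (Matrix.fromCols B X)
        (Matrix.fromRows Bᵀ X)
        (Matrix.fromBlocks ((-β) • (1 : Matrix (Fin m) (Fin m) ℝ)) 0
          0 ((-β) • (1 : Matrix (Fin n) (Fin n) ℝ))))).PosSemidef) :
    (-((A + B * Y * X⁻¹)ᵀ * X⁻¹ + X⁻¹ * (A + B * Y * X⁻¹)
        + (1 / β) • (X⁻¹ * B * Bᵀ * X⁻¹)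
        + (1 / β) • (1 : Matrix (Fin n) (Fin n) ℝ))).PosSemidef := by
  have hXT : Xᵀ = X := by simpa using hX.isHermitian.eq
  have hXinvH : (X⁻¹)ᴴ = X⁻¹ := by
    rw [conjTranspose_eq_transpose_of_trivial, transpose_nonsing_inv, hXT]
  have hCH : fromRows Bᵀ X = (fromCols B X)ᴴ := by
    rw [conjTranspose_eq_transpose_of_trivial, transpose_fromCols, hXT]
  have hCC : fromCols B X * (fromCols B X)ᴴ = B * Bᵀ + X * X := by
    rw [← hCH, fromCols_mul_fromRows]
  have hD : fromBlocks ((-β) • (1 : Matrix (Fin m) (Fin m) ℝ)) 0 0 ((-β) • 1) =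
      (-β) • (1 : Matrix (Fin m ⊕ Fin n) (Fin m ⊕ Fin n) ℝ) := by
    rw [← fromBlocks_one, fromBlocks_smul, smul_zero, smul_zero]
  have hSchur : (-(X * Aᵀ + A * X + B * Y + Yᵀ * Bᵀ + β⁻¹ • (B * Bᵀ + X * X))).PosSemidef := by
    rwa [hCH, hD, fromBlocks_neg, ← conjTranspose_neg, neg_smul, neg_neg,
      PosSemidef.fromBlocks_smul_one_iff _ _ hβ, conjTranspose_neg, Matrix.neg_mul,
      Matrix.mul_neg, neg_neg, hCC, ← neg_add'] at hLMI
  have hXdet : IsUnit X.det := (isUnit_iff_isUnit_det X).mp hX.isUnit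
  simpa only [hXinvH, Matrix.mul_neg, Matrix.neg_mul, one_div,
    nonsing_inv_mul_synthesisLMI_mul_nonsing_inv _ _ _ _ _ hXdet hXT]
    using hSchur.mul_mul_conjTranspose_same X⁻¹

/-- Content of the first LMI in the robust controller synthesis problem (12): via
Schur complements and congruence with `X⁻¹`, it yields the bounded-real-type Riccati
inequality for the closed-loop matrix `A_cl = A + BYX⁻¹` with `P = X⁻¹`. -/
theorem synthesis_lmi_to_riccati
    {n m : ℕ}
    (A : Matrix (Fin n) (Fin n) ℝ) (B : Matrix (Fin n) (Fin m) ℝ)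
    (Y : Matrix (Fin m) (Fin n) ℝ)
    (X : Matrix (Fin n) (Fin n) ℝ) (hX : X.PosDef) (hXsymm : X.IsSymm)
    (β : ℝ) (hβ : 0 < β)
    (hLMI : (-(Matrix.fromBlocks
        (X * Aᵀ + A * X + B * Y + Yᵀ * Bᵀ)
        (Matrix.fromCols B X)
        (Matrix.fromRows Bᵀ X)
        (Matrix.fromBlocks ((-β) • (1 : Matrix (Fin m) (Fin m) ℝ)) 0
          0 ((-β) • (1 : Matrix (Fin n) (Fin n) ℝ))))).PosSemidef) :
    (-((A + B * Y * X⁻¹)ᵀ * X⁻¹ + X⁻¹ * (A + B * Y * X⁻¹)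
        + (1 / β) • (X⁻¹ * B * Bᵀ * X⁻¹)
        + (1 / β) • (1 : Matrix (Fin n) (Fin n) ℝ))).PosSemidef :=
  synthesis_lmi_to_riccati_general A B Y X hX β hβ hLMI
end
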